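/- Let f be a majorant function on [0,R), κ := sup_{0<t<R}(-f(t))/t, λ := sup{t∈[0,R): κ+f'(t)<0}, θ̃ := κ/(2-κ), and let A := {(t,ε): 0≤t<λ, 0≤ε≤κt, 0<f(t)+ε}. For 0 ≤ θ ≤ θ̃ and (t,ε) ∈ A with (t₊,ε₊) = (t - (1+θ)(f(t)+ε)/f'(t), ε + 2θ(f(t)+ε)), one has f(t₊) + ε₊ < ((1+θ²)/2)(f(t)+ε). -/

import Mathlib

/-!
Write `v = f t + ε` and `s = t₊ - t = (1 + θ) v / (-f' t)`. Convexity of `f'` makes the trapezoid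
rule an overestimate, `f (t + s) ≤ f t + f' t s + (f' (t + s) - f' t) s / 2`, so it suffices that
`(f' (t + s) - f' t) s < (1 - θ)² v`. The convex function `g = f + κ·id` has infimum `0`, is
decreasing before `λ` and nondecreasing after it, so its tangent at `t` vanishes strictly before
`λ`; since `v ≤ g t`, some `w < λ` (where `f' w < -κ`) lies beyond `t + v / (-f' t - κ)`. Comparing secant slopes of `f'` at `t`
through `t + s` and `w` bounds the growth of `f'` over the step, and `θ ≤ κ / (2 - κ)` gives
`s (-f' t - κ) ≤ (1 - θ) v`.
-/

open Set

theorem ConvexOn.sub_mul_lt_mul_sq {D : Set ℝ} {φ : ℝ → ℝ} (hconv : ConvexOn ℝ D φ)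
    {t s w b v : ℝ} (ht : t ∈ D) (hts : t + s ∈ D) (hw : w ∈ D) (hs : 0 < s) (hsw : t + s < w)
    (hv : 0 < v) (hwb : φ w < φ t + b) (hvw : v < (w - t) * b) :
    (φ (t + s) - φ t) * v < s * b ^ 2 := by
  have hwt : 0 < w - t := by linarith
  have hb : 0 < b := pos_of_mul_pos_right (hv.trans hvw) hwt.le
  have hsec := hconv.secant_mono ht hts hw (by linarith) (by linarith) hsw.le
  rw [add_sub_cancel_left, div_le_div_iff₀ hs hwt] at hsec
  rcases lt_or_ge (φ (t + s) - φ t) 0 with hY | hY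
  · nlinarith
  · calc (φ (t + s) - φ t) * v ≤ (φ (t + s) - φ t) * (w - t) * b := by
          rw [mul_assoc]; exact mul_le_mul_of_nonneg_left hvw.le hY
      _ ≤ (φ w - φ t) * s * b := mul_le_mul_of_nonneg_right hsec hb.le
      _ < s * b ^ 2 := by nlinarith [mul_lt_mul_of_pos_right hwb (mul_pos hs hb)]

section OrdConnected

variable {D : Set ℝ} [D.OrdConnected] {f f' : ℝ → ℝ} {x y : ℝ}

theorem exists_hasDerivWithinAt_eq_slope (hf : ∀ u ∈ D, HasDerivWithinAt f (f' u) D u)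
    (hx : x ∈ D) (hy : y ∈ D) (hxy : x < y) : ∃ c ∈ Ioo x y, f' c = (f y - f x) / (y - x) := by
  have hsub := D.Icc_subset hx hy
  refine exists_hasDerivAt_eq_slope f f' hxy
    (fun u hu => (hf u (hsub hu)).continuousWithinAt.mono hsub) fun c hc => ?_
  exact (hf c (hsub (Ioo_subset_Icc_self hc))).hasDerivAt
    (Filter.mem_of_superset (Icc_mem_nhds hc.1 hc.2) hsub)

theorem le_of_hasDerivWithinAt_nonneg (hf : ∀ u ∈ D, HasDerivWithinAt f (f' u) D u)
    (hx : x ∈ D) (hy : y ∈ D) (hxy : x ≤ y) (hf'₀ : ∀ c ∈ Ioo x y, 0 ≤ f' c) : f x ≤ f y := by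
  rcases hxy.eq_or_lt with rfl | hxy
  · rfl
  obtain ⟨c, hc, hslope⟩ := exists_hasDerivWithinAt_eq_slope hf hx hy hxy
  rw [eq_div_iff (sub_pos.2 hxy).ne'] at hslope
  nlinarith [hf'₀ c hc]

theorem add_mul_sub_lt_of_strictMonoOn (hf : ∀ u ∈ D, HasDerivWithinAt f (f' u) D u)
    (hmono : StrictMonoOn f' D) (hx : x ∈ D) (hy : y ∈ D) (hxy : x ≠ y) :
    f x + f' x * (y - x) < f y := by
  rcases hxy.lt_or_gt with hxy | hyx
  · obtain ⟨c, hc, hslope⟩ := exists_hasDerivWithinAt_eq_slope hf hx hy hxy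
    rw [eq_div_iff (sub_pos.2 hxy).ne'] at hslope
    have : f' x < f' c := hmono hx (D.Icc_subset hx hy (Ioo_subset_Icc_self hc)) hc.1
    nlinarith
  · obtain ⟨c, hc, hslope⟩ := exists_hasDerivWithinAt_eq_slope hf hy hx hyx
    rw [eq_div_iff (sub_pos.2 hyx).ne'] at hslope
    have : f' c < f' x := hmono (D.Icc_subset hy hx (Ioo_subset_Icc_self hc)) hx hc.2
    nlinarith

theorem add_mul_sub_le_of_strictMonoOn (hf : ∀ u ∈ D, HasDerivWithinAt f (f' u) D u)
    (hmono : StrictMonoOn f' D) (hx : x ∈ D) (hy : y ∈ D) : f x + f' x * (y - x) ≤ f y := by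
  rcases eq_or_ne x y with rfl | hxy
  · simp
  · exact (add_mul_sub_lt_of_strictMonoOn hf hmono hx hy hxy).le

theorem le_add_average_mul_of_convexOn (hf : ∀ u ∈ D, HasDerivWithinAt f (f' u) D u)
    (hconv : ConvexOn ℝ D f') (hx : x ∈ D) (hy : y ∈ D) (hxy : x ≤ y) :
    f y ≤ f x + (f' x + f' y) / 2 * (y - x) := by
  rcases hxy.eq_or_lt with rfl | hxy
  · simp
  set σ := (f' y - f' x) / (y - x)
  have hψ : ∀ u ∈ D, HasDerivWithinAt (fun u => f' x * (u - x) + σ / 2 * (u - x) ^ 2 - f u)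
      (f' x + σ * (u - x) - f' u) D u := fun u hu => by
    have hP := (((hasDerivAt_id' u).sub_const x).const_mul (f' x)).add
      ((((hasDerivAt_id' u).sub_const x).pow 2).const_mul (σ / 2))
    exact (hP.hasDerivWithinAt.sub (hf u hu)).congr_deriv (by push_cast; ring)
  have hmono := le_of_hasDerivWithinAt_nonneg hψ hx hy hxy.le fun c hc => by
    have hc' : c ∈ D := D.Icc_subset hx hy (Ioo_subset_Icc_self hc)
    have := hconv.secant_mono hx hc' hy hc.1.ne' hxy.ne' hc.2.le
    rw [div_le_iff₀ (sub_pos.2 hc.1)] at this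
    linarith
  have hσ : σ * (y - x) = f' y - f' x := div_mul_cancel₀ _ (sub_pos.2 hxy).ne'
  nlinarith

theorem add_deriv_mul_sub_lt_zero (hf : ∀ u ∈ D, HasDerivWithinAt f (f' u) D u)
    (hmono : StrictMonoOn f' D) {t m : ℝ} (htm : t < m) (htmD : Ico t m ⊆ D)
    (hleft : ∀ u ∈ D, u < m → f' u < 0) (hright : ∀ u ∈ D, m < u → 0 ≤ f' u)
    (hinf : ∀ δ > 0, ∃ w ∈ D, f w < δ) : f t + f' t * (m - t) < 0 := by
  obtain ⟨p, htp, hpm⟩ := exists_between htm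
  have ht : t ∈ D := htmD ⟨le_rfl, htm⟩
  have hp : p ∈ D := htmD ⟨htp.le, hpm⟩
  have hf'p := hleft p hp hpm
  set c := f p + f' p * (m - p)
  have htc : f t + f' t * (m - t) < c := by
    have := add_mul_sub_lt_of_strictMonoOn hf hmono ht hp htp.ne
    nlinarith [hmono ht hp htp]
  have hc_left : ∀ z ∈ D, z ≤ m → c ≤ f z := fun z hz hzm => by
    have := add_mul_sub_le_of_strictMonoOn hf hmono hp hz
    nlinarith
  have hc : ∀ z ∈ D, c ≤ f z := fun z hz => by
    rcases le_or_gt z m with hzm | hmz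
    · exact hc_left z hz hzm
    · have hm : m ∈ D := D.Icc_subset hp hz ⟨hpm.le, hmz.le⟩
      exact (hc_left m hm le_rfl).trans
        (le_of_hasDerivWithinAt_nonneg hf hm hz hmz.le fun u hu => hright u
          (D.Icc_subset hm hz (Ioo_subset_Icc_self hu)) hu.1)
  have hc0 : c ≤ 0 := le_of_forall_pos_le_add fun δ hδ => by
    obtain ⟨w, hw, hwδ⟩ := hinf δ hδ
    linarith [hc w hw]
  linarith

theorem add_deriv_mul_lt_of_convexOn (hf : ∀ u ∈ D, HasDerivWithinAt f (f' u) D u)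
    (hconv : ConvexOn ℝ D f') {t s w b c v : ℝ} (ht : t ∈ D) (hw : w ∈ D) (hs : 0 < s)
    (hsw : t + s < w) (hv : 0 < v) (hwb : f' w < f' t + b) (hvw : v < (w - t) * b)
    (hsb : s * b ≤ c * v) : f (t + s) < f t + f' t * s + c ^ 2 * v / 2 := by
  have hts : t + s ∈ D := D.Icc_subset ht hw ⟨by linarith, hsw.le⟩
  have hY := hconv.sub_mul_lt_mul_sq ht hts hw hs hsw hv hwb hvw
  have hb : 0 < b := pos_of_mul_pos_right (hv.trans hvw) (by linarith)
  have hYs : (f' (t + s) - f' t) * s < c ^ 2 * v := by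
    refine lt_of_mul_lt_mul_right ?_ hv.le
    calc (f' (t + s) - f' t) * s * v = (f' (t + s) - f' t) * v * s := by ring
      _ < s * b ^ 2 * s := mul_lt_mul_of_pos_right hY hs
      _ = (s * b) ^ 2 := by ring
      _ ≤ (c * v) ^ 2 := pow_le_pow_left₀ (by positivity) hsb 2
      _ = c ^ 2 * v * v := by ring
  have htrap := le_add_average_mul_of_convexOn hf hconv ht hts (by linarith)
  rw [add_sub_cancel_left] at htrap
  linarith

end OrdConnected

theorem one_add_mul_sub_le_one_sub_mul {κ θ a : ℝ} (hκ : κ < 2) (hθ0 : 0 ≤ θ)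
    (hθ : θ ≤ κ / (2 - κ)) (ha : a ≤ 1) : (1 + θ) * (a - κ) ≤ (1 - θ) * a := by
  rw [le_div_iff₀ (sub_pos.2 hκ)] at hθ
  nlinarith

section Majorant

variable {R : ℝ} {f f' : ℝ → ℝ}

theorem neg_div_le_one_of_deriv_zero
    (hderiv : ∀ t ∈ Ico (0:ℝ) R, HasDerivWithinAt f (f' t) (Ico 0 R) t)
    (hmono : StrictMonoOn f' (Ico 0 R)) (hf0 : 0 ≤ f 0) (hf'0 : f' 0 = -1) {u : ℝ}
    (hu : u ∈ Ioo 0 R) : -f u / u ≤ 1 := by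
  have := add_mul_sub_le_of_strictMonoOn hderiv hmono ⟨le_rfl, hu.1.trans hu.2⟩
    (Ioo_subset_Ico_self hu)
  rw [hf'0] at this
  rw [div_le_one hu.1]
  linarith

theorem sSup_neg_div_le_one (hR : 0 < R)
    (hderiv : ∀ t ∈ Ico (0:ℝ) R, HasDerivWithinAt f (f' t) (Ico 0 R) t)
    (hmono : StrictMonoOn f' (Ico 0 R)) (hf0 : 0 ≤ f 0) (hf'0 : f' 0 = -1) :
    sSup ((fun t => -f t / t) '' Ioo (0:ℝ) R) ≤ 1 :=
  csSup_le ((nonempty_Ioo.2 hR).image _)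
    (forall_mem_image.2 fun _ hu => neg_div_le_one_of_deriv_zero hderiv hmono hf0 hf'0 hu)

theorem exists_add_mul_lt_of_eq_sSup (hR : 0 < R) {κ : ℝ}
    (hκ : κ = sSup ((fun t => -f t / t) '' Ioo (0:ℝ) R)) {δ : ℝ} (hδ : 0 < δ) :
    ∃ w ∈ Ico (0:ℝ) R, f w + κ * w < δ := by
  obtain ⟨_, ⟨w, hw, rfl⟩, hlt⟩ := exists_lt_of_lt_csSup ((nonempty_Ioo.2 hR).image _)
    (show κ - δ / R < sSup ((fun t => -f t / t) '' Ioo (0:ℝ) R) by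
      rw [← hκ]; linarith [div_pos hδ hR])
  refine ⟨w, Ioo_subset_Ico_self hw, ?_⟩
  rw [lt_div_iff₀ hw.1] at hlt
  have : δ / R * w < δ :=
    calc δ / R * w < δ / R * R := mul_lt_mul_of_pos_left hw.2 (div_pos hδ hR)
      _ = δ := div_mul_cancel₀ δ hR.ne'
  linarith

theorem sSup_sep_Ico_le (hR : 0 ≤ R) (p : ℝ → Prop) : sSup {t ∈ Ico (0:ℝ) R | p t} ≤ R :=
  Real.sSup_le (fun _ ht => ht.1.2.le) hR

theorem add_lt_zero_of_lt_sSup {κ : ℝ} (hmono : MonotoneOn f' (Ico 0 R)) {u : ℝ}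
    (hu : u ∈ Ico 0 R) (hlt : u < sSup {t ∈ Ico (0:ℝ) R | κ + f' t < 0}) : κ + f' u < 0 := by
  have hne : {t ∈ Ico (0:ℝ) R | κ + f' t < 0}.Nonempty := by
    by_contra h
    rw [not_nonempty_iff_eq_empty.1 h, Real.sSup_empty] at hlt
    exact hlt.not_ge hu.1
  obtain ⟨w, hw, huw⟩ := exists_lt_of_lt_csSup hne hlt
  exact (add_le_add le_rfl (hmono hu hw.1 huw.le)).trans_lt hw.2

theorem add_nonneg_of_sSup_lt {κ u : ℝ} (hu : u ∈ Ico 0 R)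
    (hlt : sSup {t ∈ Ico (0:ℝ) R | κ + f' t < 0} < u) : 0 ≤ κ + f' u :=
  not_lt.1 fun h => hlt.not_ge (le_csSup ⟨R, fun _ ht => ht.1.2.le⟩ ⟨hu, h⟩)

theorem mul_add_add_mul_sub_lt_zero (hR : 0 < R)
    (hderiv : ∀ t ∈ Ico (0:ℝ) R, HasDerivWithinAt f (f' t) (Ico 0 R) t)
    (hmono : StrictMonoOn f' (Ico 0 R)) {κ lam t : ℝ}
    (hκ : κ = sSup ((fun t => -f t / t) '' Ioo (0:ℝ) R))
    (hlam : lam = sSup {t ∈ Ico (0:ℝ) R | κ + f' t < 0}) (ht0 : 0 ≤ t) (htlam : t < lam) :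
    κ * t + f t + (κ + f' t) * (lam - t) < 0 := by
  have hlamR : lam ≤ R := hlam ▸ sSup_sep_Ico_le hR.le _
  refine add_deriv_mul_sub_lt_zero (f := fun u => κ * u + f u) (f' := fun u => κ + f' u)
    (fun u hu => (((hasDerivWithinAt_id u _).const_mul κ).add (hderiv u hu)).congr_deriv
      (by rw [mul_one])) ?_ htlam (Ico_subset_Ico ht0 hlamR) ?_ ?_ ?_
  · exact fun x hx y hy hxy => add_lt_add_of_le_of_lt le_rfl (hmono hx hy hxy)
  · exact fun u hu hul => add_lt_zero_of_lt_sSup hmono.monotoneOn hu (hlam ▸ hul)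
  · exact fun u hu hlu => add_nonneg_of_sSup_lt hu (hlam ▸ hlu)
  · exact fun δ hδ => (exists_add_mul_lt_of_eq_sSup hR hκ hδ).imp fun w ⟨hw, h⟩ =>
      ⟨hw, by linarith⟩

end Majorant

theorem stmt7_general (R : ℝ) (hR : 0 < R) (f f' : ℝ → ℝ)
    (hderiv : ∀ t ∈ Ico (0:ℝ) R, HasDerivWithinAt f (f' t) (Ico 0 R) t)
    (h1 : 0 < f 0) (h1' : f' 0 = -1)
    (h2conv : ConvexOn ℝ (Ico 0 R) f')
    (h2mono : StrictMonoOn f' (Ico 0 R))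
    (κ lam θ : ℝ)
    (hκ : κ = sSup ((fun t => -f t / t) '' Ioo (0:ℝ) R))
    (hlam : lam = sSup {t ∈ Ico (0:ℝ) R | κ + f' t < 0})
    (hθ0 : 0 ≤ θ) (hθ : θ ≤ κ / (2 - κ))
    (A : Set (ℝ × ℝ))
    (hA : A = {p : ℝ × ℝ | 0 ≤ p.1 ∧ p.1 < lam ∧ 0 ≤ p.2 ∧ p.2 ≤ κ * p.1 ∧
      0 < f p.1 + p.2})
    (t ε : ℝ) (ht : (t, ε) ∈ A) :
    f (t - (1 + θ) * (f t + ε) / f' t) + (ε + 2 * θ * (f t + ε)) <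
      ((1 + θ ^ 2) / 2) * (f t + ε) := by
  obtain ⟨ht0, htlam, -, hεκ, hv⟩ : 0 ≤ t ∧ t < lam ∧ 0 ≤ ε ∧ ε ≤ κ * t ∧ 0 < f t + ε := by
    simpa [hA] using ht
  have hκ1 : κ ≤ 1 := hκ ▸ sSup_neg_div_le_one hR hderiv h2mono h1.le h1'
  have hκ0 : 0 ≤ κ := by
    have := (le_div_iff₀ (by linarith : (0:ℝ) < 2 - κ)).1 hθ
    nlinarith
  have hlamR : lam ≤ R := hlam ▸ sSup_sep_Ico_le hR.le _
  have htD : t ∈ Ico 0 R := ⟨ht0, htlam.trans_le hlamR⟩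
  have hf't : κ + f' t < 0 := add_lt_zero_of_lt_sSup h2mono.monotoneOn htD (hlam ▸ htlam)
  have hf't1 : -1 ≤ f' t := h1' ▸ h2mono.monotoneOn ⟨le_rfl, hR⟩ htD ht0
  have hkey := mul_add_add_mul_sub_lt_zero hR hderiv h2mono hκ hlam ht0 htlam
  set v := f t + ε
  set b := -f' t - κ
  have hb : 0 < b := by linarith
  set s := -((1 + θ) * v / f' t)
  have hsf : -f' t * s = (1 + θ) * v := by rw [neg_mul_neg, mul_div_cancel₀ _ (by linarith)]
  have hsb : s * b ≤ (1 - θ) * v := by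
    have := one_add_mul_sub_le_one_sub_mul (by linarith) hθ0 hθ (neg_le.1 hf't1)
    nlinarith
  obtain ⟨w, hvw, hwlam⟩ := exists_between (show t + v / b < lam by
    rw [← lt_sub_iff_add_lt', div_lt_iff₀ hb]; linarith)
  rw [← lt_sub_iff_add_lt', div_lt_iff₀ hb] at hvw
  have hs : 0 < s := neg_pos.2 (div_neg_of_pos_of_neg (by positivity) (by linarith))
  have hwD : w ∈ Ico 0 R := ⟨by nlinarith, hwlam.trans_le hlamR⟩
  have hwb : f' w < f' t + b := by
    linarith [add_lt_zero_of_lt_sSup h2mono.monotoneOn hwD (hlam ▸ hwlam)]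
  have hstep :=
    add_deriv_mul_lt_of_convexOn hderiv h2conv htD hwD hs (by nlinarith) hv hwb hvw hsb
  rw [sub_eq_add_neg]
  linarith

/-- along the inexact Newton iteration on the majorant function,
`f t₊ + ε₊ < ((1+θ²)/2)(f t + ε)`. -/
theorem stmt7 (R : ℝ) (hR : 0 < R) (f f' : ℝ → ℝ)
    (hderiv : ∀ t ∈ Ico (0:ℝ) R, HasDerivWithinAt f (f' t) (Ico 0 R) t)
    (hcont : ContinuousOn f' (Ico 0 R))
    (h1 : 0 < f 0) (h1' : f' 0 = -1)
    (h2conv : ConvexOn ℝ (Ico 0 R) f')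
    (h2mono : StrictMonoOn f' (Ico 0 R))
    (h3 : ∃ t ∈ Ioo (0:ℝ) R, f t = 0)
    (h4 : ∃ t ∈ Ioo (0:ℝ) R, f t < 0)
    (κ lam θ : ℝ)
    (hκ : κ = sSup ((fun t => -f t / t) '' Ioo (0:ℝ) R))
    (hlam : lam = sSup {t ∈ Ico (0:ℝ) R | κ + f' t < 0})
    (hθ0 : 0 ≤ θ) (hθ : θ ≤ κ / (2 - κ))
    (A : Set (ℝ × ℝ))
    (hA : A = {p : ℝ × ℝ | 0 ≤ p.1 ∧ p.1 < lam ∧ 0 ≤ p.2 ∧ p.2 ≤ κ * p.1 ∧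
      0 < f p.1 + p.2})
    (t ε : ℝ) (ht : (t, ε) ∈ A) :
    f (t - (1 + θ) * (f t + ε) / f' t) + (ε + 2 * θ * (f t + ε)) <
      ((1 + θ ^ 2) / 2) * (f t + ε) :=
  stmt7_general R hR f f' hderiv h1 h1' h2conv h2mono κ lam θ hκ hlam hθ0 hθ A hA t ε ht
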